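/- Let A be a nonempty finite alphabet with a dissimilarity function d : A × A → ℝ≥0, let s_1, …, s_n be strings in A^ℓ, let k ≥ 1, and let t ∈ ℝ. Extend d to strings of equal length by D(u,v) = Σ_{p=1}^{ℓ} d(u(p), v(p)). Then the following are equivalent: (1) there exist k strings m_1, …, m_k ∈ A^ℓ such that Σ_{i=1}^{n} min_{1 ≤ j ≤ k} D(s_i, m_j) ≤ t; (2) there exist a string W ∈ A^{kℓ} and an assignment σ : {1,…,n} → {1,…,k} such that Σ_{i=1}^{n} Σ_{p=1}^{ℓ} d(s_i(p), W((σ(i)−1)·ℓ + p)) ≤ t. -/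

import Mathlib

/-!
Once each agent is sent to a median attaining its minimum, the k-median cost is the cost of an
assignment `σ`, and any assignment costs at least the k-median cost; so the left side holds iff
some pair `(m, σ)` has `Σ_i D(s_i, m_{σ(i)}) ≤ t`. Gluing `m_1, …, m_k` into the blocks of `W`
(and cutting `W` back into them) is a bijection `(Fin k → Fin ℓ → A) ≃ (Fin (k * ℓ) → A)`
that turns this cost into the Clustered-Kemeny one.
-/

open Finset

section Assignment

variable {ι κ M : Type*} [Fintype ι] [Fintype κ]
  [AddCommMonoid M] [LinearOrder M]

theorem Finset.exists_sum_comp_eq_sum_inf' (h : (univ : Finset κ).Nonempty) (c : ι → κ → M) :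
    ∃ σ : ι → κ, ∑ i, c i (σ i) = ∑ i, univ.inf' h (c i) := by
  choose σ _ hσ using fun i => exists_mem_eq_inf' h (c i)
  exact ⟨σ, sum_congr rfl fun i _ => (hσ i).symm⟩

theorem Finset.sum_inf'_le_iff_exists_sum_comp_le [IsOrderedAddMonoid M] (h : (univ : Finset κ).Nonempty)
    (c : ι → κ → M) (t : M) :
    ∑ i, univ.inf' h (c i) ≤ t ↔ ∃ σ : ι → κ, ∑ i, c i (σ i) ≤ t := by
  constructor
  · intro hle
    obtain ⟨σ, hσ⟩ := exists_sum_comp_eq_sum_inf' h c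
    exact ⟨σ, hσ ▸ hle⟩
  · rintro ⟨σ, hσ⟩
    exact (sum_le_sum fun i _ => inf'_le (c i) (mem_univ (σ i))).trans hσ

end Assignment

theorem finProdFinEquiv_eq_mk {k ℓ : ℕ} (j : Fin k) (p : Fin ℓ) (h : j * ℓ + p < k * ℓ) :
    finProdFinEquiv (j, p) = ⟨j * ℓ + p, h⟩ :=
  Fin.ext <| by simp only [finProdFinEquiv_apply_val]; ring

/-- Correctness of the reduction from k-string-median to
Clustered-Kemeny. With `D(u,v) = Σ_p d(u(p), v(p))` on strings of length `ℓ`,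
there exist `k` median strings `m_1,…,m_k ∈ A^ℓ` with
`Σ_i min_j D(s_i, m_j) ≤ t` iff there exist a string `W ∈ A^{kℓ}` and an
assignment `σ` of agents to the `k` contiguous length-`ℓ` blocks of `W` with
`Σ_i Σ_p d(s_i(p), W(σ(i)·ℓ + p)) ≤ t` (blocks and positions 0-indexed). -/
theorem kMedian_iff_clusteredKemeny
    {A : Type*}
    {n ℓ k : ℕ} (hk : 1 ≤ k)
    (s : Fin n → Fin ℓ → A) (d : A → A → ℝ)
    (t : ℝ) :
    (∃ m : Fin k → Fin ℓ → A,
      (∑ i : Fin n, Finset.univ.inf' (Finset.univ_nonempty_iff.mpr ⟨⟨0, hk⟩⟩)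
          (fun j : Fin k => ∑ p : Fin ℓ, d (s i p) (m j p))) ≤ t)
    ↔ (∃ (W : Fin (k * ℓ) → A) (σ : Fin n → Fin k),
        (∑ i : Fin n, ∑ p : Fin ℓ,
          d (s i p) (W ⟨(σ i).val * ℓ + p.val, by
            have h1 := (σ i).isLt
            have h2 := p.isLt
            calc (σ i).val * ℓ + p.val < ((σ i).val + 1) * ℓ := by
                  rw [Nat.succ_mul]; omega
              _ ≤ k * ℓ := Nat.mul_le_mul_right ℓ h1⟩)) ≤ t) := by
  simp only [sum_inf'_le_iff_exists_sum_comp_le, ← finProdFinEquiv_eq_mk]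
  constructor
  · rintro ⟨m, σ, hσ⟩
    refine ⟨fun q => m (finProdFinEquiv.symm q).1 (finProdFinEquiv.symm q).2, σ, ?_⟩
    simpa only [Equiv.symm_apply_apply] using hσ
  · rintro ⟨W, σ, hW⟩
    exact ⟨fun j p => W (finProdFinEquiv (j, p)), σ, hW⟩
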